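/- arXiv:2012.09909 — 2 statements merged into one kernel-verified Lean document; each statement's English description precedes it below -/
import Mathlib

section
/- Let G : ℝ³ → ℝ be measurable and satisfy |G(v)| ≤ C₀ e^{−c₀|v|²} for all v ∈ ℝ³, for some constants C₀ ≥ 0 and c₀ > 0. Then for each coordinate i = 1, 2, 3, the function v ↦ v_i Q(G,G)(v) is integrable over ℝ³ and ∫_{ℝ³} v_i Q(G,G)(v) dv = 0. -/
open MeasureTheory Real Set
noncomputable section

abbrev E3 := EuclideanSpace ℝ (Fin 3)

/-- Hard-sphere Boltzmann collision operator `Q(F₁,F₂)(v)`, where the angular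
integration is with respect to the 2-dimensional Hausdorff (surface) measure on the
unit sphere `S² ⊂ ℝ³`. -/
def collQ (F₁ F₂ : E3 → ℝ) (v : E3) : ℝ :=
  ∫ u : E3, ∫ ω in Metric.sphere (0 : E3) 1,
    |(inner ℝ (v - u) ω : ℝ)| *
      (F₁ (u - (inner ℝ (u - v) ω : ℝ) • ω) * F₂ (v + (inner ℝ (u - v) ω : ℝ) • ω)
        - F₁ u * F₂ v) ∂(μH[2])

/-!
For a unit vector `ω`, the collision map `(v, u) ↦ (v', u')` is a linear involution of `ℝ³ × ℝ³`,
so it preserves Lebesgue measure; it conserves `v + u` and `|v|² + |u|²` and reverses the sign of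
the collision integrand. Together with the symmetry `v ↔ u`, this makes `∫∫ vᵢ (…) dv du` vanish
for each fixed `ω`. Energy conservation bounds the integrand by a Gaussian in `(v, u)`, and the
unit sphere has finite surface measure (it is the image of a compact square under spherical
coordinates, a Lipschitz map), so Fubini lets us integrate over `(v, u)` first.
-/

lemma abs_mul_le_of_abs_le_gaussian {E : Type*} [Norm E] {G : E → ℝ} {C₀ c₀ : ℝ}
    (hbd : ∀ v, |G v| ≤ C₀ * exp (-c₀ * ‖v‖ ^ 2)) (a b : E) :
    |G a * G b| ≤ C₀ ^ 2 * exp (-c₀ * (‖a‖ ^ 2 + ‖b‖ ^ 2)) := by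
  calc |G a * G b| = |G a| * |G b| := abs_mul _ _
    _ ≤ C₀ * exp (-c₀ * ‖a‖ ^ 2) * (C₀ * exp (-c₀ * ‖b‖ ^ 2)) :=
      mul_le_mul (hbd a) (hbd b) (abs_nonneg _) ((abs_nonneg _).trans (hbd a))
    _ = C₀ ^ 2 * exp (-c₀ * (‖a‖ ^ 2 + ‖b‖ ^ 2)) := by
      rw [mul_add, exp_add]; ring

lemma one_add_mul_exp_neg_le {c x : ℝ} (hc : 0 < c) (hx : 0 ≤ x) :
    (1 + x) * exp (-c * x) ≤ (1 + 2 / c) * exp (-(c / 2) * x) := by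
  have hlin : 1 + x ≤ (1 + 2 / c) * exp (c / 2 * x) := by
    calc 1 + x ≤ (1 + 2 / c) * (c / 2 * x + 1) := by
          field_simp
          nlinarith [mul_nonneg hc.le hx]
      _ ≤ (1 + 2 / c) * exp (c / 2 * x) := by gcongr; exact add_one_le_exp _
  calc (1 + x) * exp (-c * x) ≤ (1 + 2 / c) * exp (c / 2 * x) * exp (-c * x) := by gcongr
    _ = (1 + 2 / c) * exp (-(c / 2) * x) := by rw [mul_assoc, ← exp_add]; ring_nf

section Collision

variable {V : Type*} [NormedAddCommGroup V] [InnerProductSpace ℝ V]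

/-- `collisionMap ω (v, u) = (v', u')`, the post-collisional velocities. -/
def collisionMap (ω : V) : V × V →ₗ[ℝ] V × V where
  toFun p := (p.1 + inner ℝ (p.2 - p.1) ω • ω, p.2 - inner ℝ (p.2 - p.1) ω • ω)
  map_add' p q := by
    ext <;> simp only [Prod.fst_add, Prod.snd_add, add_sub_add_comm, inner_add_left, add_smul]
    abel
  map_smul' c p := by
    simp only [Prod.smul_fst, Prod.smul_snd, ← smul_sub, real_inner_smul_left, mul_smul,
      RingHom.id_apply]
    ext <;> simp only [Prod.smul_fst, Prod.smul_snd, smul_add, smul_sub]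

@[simp]
lemma collisionMap_apply (ω : V) (p : V × V) :
    collisionMap ω p = (p.1 + inner ℝ (p.2 - p.1) ω • ω, p.2 - inner ℝ (p.2 - p.1) ω • ω) :=
  rfl

lemma collisionMap_fst_add_snd (ω : V) (p : V × V) :
    (collisionMap ω p).1 + (collisionMap ω p).2 = p.1 + p.2 := by
  simp only [collisionMap_apply]; abel

lemma collisionMap_involutive {ω : V} (hω : ‖ω‖ = 1) : Function.Involutive (collisionMap ω) := by
  have hωω : inner ℝ ω ω = (1 : ℝ) := by rw [real_inner_self_eq_norm_sq, hω, one_pow]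
  rintro ⟨v, u⟩
  simp only [collisionMap_apply, inner_sub_left, inner_add_left, real_inner_smul_left, hωω]
  ext <;> dsimp only <;> module

lemma norm_sq_collisionMap {ω : V} (hω : ‖ω‖ = 1) (p : V × V) :
    ‖(collisionMap ω p).1‖ ^ 2 + ‖(collisionMap ω p).2‖ ^ 2 = ‖p.1‖ ^ 2 + ‖p.2‖ ^ 2 := by
  simp only [collisionMap_apply, norm_add_sq_real, norm_sub_sq_real, norm_smul, hω,
    real_inner_smul_right, inner_sub_left, Real.norm_eq_abs, mul_one, sq_abs]
  ring

lemma measurePreserving_collisionMap [FiniteDimensional ℝ V] [MeasurableSpace V] [BorelSpace V]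
    (μ : Measure V) [μ.IsAddHaarMeasure] {ω : V} (hω : ‖ω‖ = 1) :
    MeasurePreserving (collisionMap ω) (μ.prod μ) (μ.prod μ) := by
  have hinv : collisionMap ω ∘ₗ collisionMap ω = LinearMap.id :=
    LinearMap.ext (collisionMap_involutive hω)
  have hdet : LinearMap.det (collisionMap ω) * LinearMap.det (collisionMap ω) = 1 := by
    rw [← LinearMap.det_comp, hinv, LinearMap.det_id]
  have habs : |LinearMap.det (collisionMap ω)| = 1 := by
    rcases mul_self_eq_one_iff.1 hdet with h | h <;> simp [h]
  refine ⟨(collisionMap ω).continuous_of_finiteDimensional.measurable, ?_⟩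
  rw [Measure.map_linearMap_addHaar_eq_smul_addHaar _ (left_ne_zero_of_mul_eq_one hdet), abs_inv,
    habs, inv_one, ENNReal.ofReal_one, one_smul]

/-- The integrand of `collQ G G v = ∫ u, ∫ ω in S², collisionIntegrand G v u ω ∂μH[2]`. -/
def collisionIntegrand (G : V → ℝ) (v u ω : V) : ℝ :=
  |inner ℝ (v - u) ω| *
    (G (u - inner ℝ (u - v) ω • ω) * G (v + inner ℝ (u - v) ω • ω) - G u * G v)

lemma collisionIntegrand_comm (G : V → ℝ) (v u ω : V) :
    collisionIntegrand G u v ω = collisionIntegrand G v u ω := by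
  have h : inner ℝ (v - u) ω = -inner ℝ (u - v) ω := by rw [← inner_neg_left, neg_sub]
  simp only [collisionIntegrand, h, abs_neg, neg_smul, sub_neg_eq_add, ← sub_eq_add_neg]
  ring

lemma collisionIntegrand_eq (G : V → ℝ) (v u ω : V) :
    collisionIntegrand G v u ω = |inner ℝ (v - u) ω| *
      (G (collisionMap ω (v, u)).2 * G (collisionMap ω (v, u)).1 - G u * G v) :=
  rfl

lemma inner_sub_collisionMap {ω : V} (hω : ‖ω‖ = 1) (p : V × V) :
    inner ℝ ((collisionMap ω p).1 - (collisionMap ω p).2) ω = -inner ℝ (p.1 - p.2) ω := by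
  have hωω : inner ℝ ω ω = (1 : ℝ) := by rw [real_inner_self_eq_norm_sq, hω, one_pow]
  simp only [collisionMap_apply, inner_sub_left, inner_add_left, real_inner_smul_left, hωω]
  ring

lemma collisionIntegrand_collisionMap (G : V → ℝ) {ω : V} (hω : ‖ω‖ = 1) (p : V × V) :
    collisionIntegrand G (collisionMap ω p).1 (collisionMap ω p).2 ω =
      -collisionIntegrand G p.1 p.2 ω := by
  rw [collisionIntegrand_eq, collisionIntegrand_eq, Prod.mk.eta, collisionMap_involutive hω,
    inner_sub_collisionMap hω, abs_neg]
  ring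

lemma measurable_collisionIntegrand [MeasurableSpace V] [BorelSpace V] [SecondCountableTopology V]
    {G : V → ℝ} (hG : Measurable G) :
    Measurable fun p : (V × V) × V => collisionIntegrand G p.1.1 p.1.2 p.2 := by
  unfold collisionIntegrand
  fun_prop

lemma abs_collisionIntegrand_le {G : V → ℝ} {C₀ c₀ : ℝ}
    (hbd : ∀ v, |G v| ≤ C₀ * exp (-c₀ * ‖v‖ ^ 2)) {ω : V} (hω : ‖ω‖ = 1) (v u : V) :
    |collisionIntegrand G v u ω| ≤
      2 * C₀ ^ 2 * (‖v‖ + ‖u‖) * exp (-c₀ * (‖v‖ ^ 2 + ‖u‖ ^ 2)) := by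
  set p' := collisionMap ω (v, u)
  have hrel : |inner ℝ (v - u) ω| ≤ ‖v‖ + ‖u‖ :=
    (abs_real_inner_le_norm _ _).trans (by rw [hω, mul_one]; exact norm_sub_le _ _)
  have hgain : |G p'.2 * G p'.1 - G u * G v| ≤ 2 * C₀ ^ 2 * exp (-c₀ * (‖v‖ ^ 2 + ‖u‖ ^ 2)) := by
    have henergy : ‖p'.2‖ ^ 2 + ‖p'.1‖ ^ 2 = ‖v‖ ^ 2 + ‖u‖ ^ 2 := by
      rw [add_comm, norm_sq_collisionMap hω]
    calc |G p'.2 * G p'.1 - G u * G v| ≤ |G p'.2 * G p'.1| + |G u * G v| := abs_sub _ _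
      _ ≤ C₀ ^ 2 * exp (-c₀ * (‖p'.2‖ ^ 2 + ‖p'.1‖ ^ 2)) +
          C₀ ^ 2 * exp (-c₀ * (‖u‖ ^ 2 + ‖v‖ ^ 2)) :=
        add_le_add (abs_mul_le_of_abs_le_gaussian hbd _ _) (abs_mul_le_of_abs_le_gaussian hbd _ _)
      _ = 2 * C₀ ^ 2 * exp (-c₀ * (‖v‖ ^ 2 + ‖u‖ ^ 2)) := by
        rw [henergy, add_comm (‖u‖ ^ 2)]; ring
  rw [collisionIntegrand_eq, abs_mul, abs_abs, mul_comm (2 * C₀ ^ 2), mul_assoc]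
  exact mul_le_mul hrel hgain (abs_nonneg _) (by positivity)

lemma norm_mul_abs_collisionIntegrand_le {G : V → ℝ} {C₀ c₀ : ℝ} (hc₀ : 0 < c₀)
    (hbd : ∀ v, |G v| ≤ C₀ * exp (-c₀ * ‖v‖ ^ 2)) {ω : V} (hω : ‖ω‖ = 1) (v u : V) :
    ‖v‖ * |collisionIntegrand G v u ω| ≤
      2 * C₀ ^ 2 * (1 + 2 / c₀) ^ 2 * (exp (-(c₀ / 2) * ‖v‖ ^ 2) * exp (-(c₀ / 2) * ‖u‖ ^ 2)) := by
  have hpoly : ‖v‖ * (‖v‖ + ‖u‖) ≤ (1 + ‖v‖ ^ 2) * (1 + ‖u‖ ^ 2) := by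
    nlinarith [sq_nonneg (‖v‖ * ‖u‖ - 1), sq_nonneg ‖u‖, sq_nonneg ‖v‖]
  calc ‖v‖ * |collisionIntegrand G v u ω|
      ≤ ‖v‖ * (2 * C₀ ^ 2 * (‖v‖ + ‖u‖) * exp (-c₀ * (‖v‖ ^ 2 + ‖u‖ ^ 2))) := by
        gcongr; exact abs_collisionIntegrand_le hbd hω v u
    _ = 2 * C₀ ^ 2 * (‖v‖ * (‖v‖ + ‖u‖)) * (exp (-c₀ * ‖v‖ ^ 2) * exp (-c₀ * ‖u‖ ^ 2)) := by
        rw [← exp_add, ← mul_add]; ring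
    _ ≤ 2 * C₀ ^ 2 * ((1 + ‖v‖ ^ 2) * (1 + ‖u‖ ^ 2)) *
          (exp (-c₀ * ‖v‖ ^ 2) * exp (-c₀ * ‖u‖ ^ 2)) := by gcongr
    _ = 2 * C₀ ^ 2 * (((1 + ‖v‖ ^ 2) * exp (-c₀ * ‖v‖ ^ 2)) *
          ((1 + ‖u‖ ^ 2) * exp (-c₀ * ‖u‖ ^ 2))) := by ring
    _ ≤ 2 * C₀ ^ 2 * (((1 + 2 / c₀) * exp (-(c₀ / 2) * ‖v‖ ^ 2)) *
          ((1 + 2 / c₀) * exp (-(c₀ / 2) * ‖u‖ ^ 2))) := by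
        gcongr 2 * C₀ ^ 2 * (?_ * ?_) <;> exact one_add_mul_exp_neg_le hc₀ (sq_nonneg _)
    _ = _ := by ring

variable [FiniteDimensional ℝ V] [MeasurableSpace V] [BorelSpace V]

lemma integrable_exp_neg_mul_sq_norm {b : ℝ} (hb : 0 < b) :
    Integrable fun v : V => exp (-b * ‖v‖ ^ 2) := by
  refine (GaussianFourier.integrable_cexp_neg_mul_sq_norm_add (V := V) (b := (b : ℂ))
    (by simpa using hb) 0 0).norm.congr (.of_forall fun v => ?_)
  simp [Complex.norm_exp, ← Complex.ofReal_pow, ← Complex.ofReal_mul, ← Complex.ofReal_neg]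

lemma integrable_mul_collisionIntegrand (φ : V →L[ℝ] ℝ) {G : V → ℝ} (hG : Measurable G)
    {C₀ c₀ : ℝ} (hc₀ : 0 < c₀) (hbd : ∀ v, |G v| ≤ C₀ * exp (-c₀ * ‖v‖ ^ 2))
    {ν : Measure V} [IsFiniteMeasure ν] (hν : ∀ᵐ ω ∂ν, ‖ω‖ = 1) :
    Integrable (fun p : (V × V) × V => φ p.1.1 * collisionIntegrand G p.1.1 p.1.2 p.2)
      (((volume : Measure V).prod volume).prod ν) := by
  have hg := integrable_exp_neg_mul_sq_norm (V := V) (half_pos hc₀)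
  have hmajorant := ((hg.mul_prod hg).mul_prod (integrable_const (1 : ℝ) (μ := ν))).const_mul
    (‖φ‖ * (2 * C₀ ^ 2 * (1 + 2 / c₀) ^ 2))
  refine hmajorant.mono' ((φ.measurable.comp (measurable_fst.comp measurable_fst)).mul
    (measurable_collisionIntegrand hG)).aestronglyMeasurable ?_
  filter_upwards [Measure.quasiMeasurePreserving_snd.ae hν] with p hp
  have hbound := norm_mul_abs_collisionIntegrand_le hc₀ hbd hp p.1.1 p.1.2
  calc ‖φ p.1.1 * collisionIntegrand G p.1.1 p.1.2 p.2‖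
      = |φ p.1.1| * |collisionIntegrand G p.1.1 p.1.2 p.2| := by rw [Real.norm_eq_abs, abs_mul]
    _ ≤ ‖φ‖ * ‖p.1.1‖ * |collisionIntegrand G p.1.1 p.1.2 p.2| := by
        gcongr; exact φ.le_opNorm _
    _ ≤ ‖φ‖ * (2 * C₀ ^ 2 * (1 + 2 / c₀) ^ 2 *
          (exp (-(c₀ / 2) * ‖p.1.1‖ ^ 2) * exp (-(c₀ / 2) * ‖p.1.2‖ ^ 2))) := by
        rw [mul_assoc]; gcongr
    _ = _ := by ring

lemma integral_mul_collisionIntegrand_eq_zero (μ : Measure V) [μ.IsAddHaarMeasure] (G : V → ℝ)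
    {ω : V} (hω : ‖ω‖ = 1) {ψ : V → ℝ}
    (hψ : ∀ p, ψ (collisionMap ω p).1 + ψ (collisionMap ω p).2 = ψ p.1 + ψ p.2)
    (hint : Integrable (fun p : V × V => ψ p.1 * collisionIntegrand G p.1 p.2 ω) (μ.prod μ)) :
    ∫ p, ψ p.1 * collisionIntegrand G p.1 p.2 ω ∂(μ.prod μ) = 0 := by
  -- `∫ ψ(v) K = ∫ ψ(u) K` by `v ↔ u`, and `∫ (ψ(v) + ψ(u)) K = 0` since it is odd under the
  -- collision map.
  have hswap : ∀ p : V × V, ψ p.swap.1 * collisionIntegrand G p.swap.1 p.swap.2 ω =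
      ψ p.2 * collisionIntegrand G p.1 p.2 ω := fun p => by
    rw [Prod.fst_swap, Prod.snd_swap, collisionIntegrand_comm]
  have hint' : Integrable (fun p : V × V => ψ p.2 * collisionIntegrand G p.1 p.2 ω) (μ.prod μ) := by
    simpa only [Function.comp_def, hswap] using hint.swap
  have hsym : ∫ p, ψ p.2 * collisionIntegrand G p.1 p.2 ω ∂(μ.prod μ) =
      ∫ p, ψ p.1 * collisionIntegrand G p.1 p.2 ω ∂(μ.prod μ) := by
    simp only [← hswap]
    exact integral_prod_swap fun p : V × V => ψ p.1 * collisionIntegrand G p.1 p.2 ω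
  have hemb : MeasurableEmbedding (collisionMap ω) :=
    (MeasurableEquiv.ofInvolutive _ (collisionMap_involutive hω)
      (collisionMap ω).continuous_of_finiteDimensional.measurable).measurableEmbedding
  set h := fun p : V × V => (ψ p.1 + ψ p.2) * collisionIntegrand G p.1 p.2 ω with hh
  have hodd : ∫ p, h p ∂(μ.prod μ) = -∫ p, h p ∂(μ.prod μ) := by
    rw [← integral_neg, ← (measurePreserving_collisionMap μ hω).integral_comp hemb h]
    congr with p
    simp only [hh, hψ, collisionIntegrand_collisionMap G hω, mul_neg]
  have hsum := integral_add hint hint'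
  simp only [← add_mul] at hsum
  linarith

end Collision

def sphericalCoords (p : Fin 2 → ℝ) : E3 :=
  !₂[cos (p 0) * cos (p 1), sin (p 0) * cos (p 1), sin (p 1)]

lemma contDiff_sphericalCoords : ContDiff ℝ 1 sphericalCoords := by
  refine contDiff_euclidean.2 fun k => ?_
  fin_cases k <;> simp [sphericalCoords] <;> fun_prop

lemma sphere_subset_image_sphericalCoords :
    Metric.sphere (0 : E3) 1 ⊆ sphericalCoords '' Metric.closedBall 0 π := by
  intro y hy
  have hy1 : y 0 ^ 2 + y 1 ^ 2 + y 2 ^ 2 = 1 := by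
    have h := EuclideanSpace.real_norm_sq_eq y
    simp only [mem_sphere_iff_norm, sub_zero] at hy
    simpa [hy, Fin.sum_univ_three] using h.symm
  set z : ℂ := ⟨y 0, y 1⟩
  have hz : ‖z‖ = cos (arcsin (y 2)) := by
    rw [cos_arcsin, Complex.norm_def, Complex.normSq_apply]
    congr 1; simp [z]; linarith
  refine ⟨![Complex.arg z, arcsin (y 2)], ?_, ?_⟩
  · rw [mem_closedBall_zero_iff, pi_norm_le_iff_of_nonneg pi_pos.le]
    intro k; fin_cases k
    · simpa using abs_le.2 ⟨(Complex.neg_pi_lt_arg z).le, Complex.arg_le_pi z⟩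
    · simpa using abs_le.2 ⟨by linarith [neg_pi_div_two_le_arcsin (y 2), pi_pos],
        by linarith [arcsin_le_pi_div_two (y 2), pi_pos]⟩
  · ext k; fin_cases k
    · simp [sphericalCoords, ← hz, mul_comm, Complex.norm_mul_cos_arg, z]
    · simp [sphericalCoords, ← hz, mul_comm, Complex.norm_mul_sin_arg, z]
    · simpa [sphericalCoords] using
        sin_arcsin (by nlinarith [sq_nonneg (y 0), sq_nonneg (y 1), sq_nonneg (y 2 + 1)])
          (by nlinarith [sq_nonneg (y 0), sq_nonneg (y 1), sq_nonneg (y 2 - 1)])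

lemma hausdorffMeasure_sphere_lt_top : μH[2] (Metric.sphere (0 : E3) 1) < ⊤ := by
  obtain ⟨K, hK⟩ := contDiff_sphericalCoords.contDiffOn.exists_lipschitzOnWith one_ne_zero
    (convex_closedBall 0 π) (isCompact_closedBall 0 π)
  have hball : μH[2] (Metric.closedBall (0 : Fin 2 → ℝ) π) < ⊤ := by
    have h := hausdorffMeasure_pi_real (ι := Fin 2)
    simp only [Fintype.card_fin, Nat.cast_ofNat] at h
    rw [h]
    exact measure_closedBall_lt_top
  calc μH[2] (Metric.sphere (0 : E3) 1)
      ≤ μH[2] (sphericalCoords '' Metric.closedBall 0 π) :=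
        measure_mono sphere_subset_image_sphericalCoords
    _ ≤ K ^ (2 : ℝ) * μH[2] (Metric.closedBall (0 : Fin 2 → ℝ) π) :=
        hK.hausdorffMeasure_image_le zero_le_two
    _ < ⊤ := ENNReal.mul_lt_top (by simp) hball

instance : IsFiniteMeasure (μH[2].restrict (Metric.sphere (0 : E3) 1)) :=
  ⟨by simpa using hausdorffMeasure_sphere_lt_top⟩

theorem collision_invariant_momentum_general (G : E3 → ℝ) (hG : Measurable G)
    (C₀ c₀ : ℝ) (hc₀ : 0 < c₀)
    (hbd : ∀ v : E3, |G v| ≤ C₀ * Real.exp (-c₀ * ‖v‖ ^ 2)) :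
    ∀ i : Fin 3,
      Integrable (fun v : E3 => v i * collQ G G v) ∧
        (∫ v : E3, v i * collQ G G v) = 0 := by
  intro i
  set ν := μH[2].restrict (Metric.sphere (0 : E3) 1)
  set F : (E3 × E3) × E3 → ℝ := fun p => p.1.1 i * collisionIntegrand G p.1.1 p.1.2 p.2
  have hν : ∀ᵐ ω ∂ν, ‖ω‖ = 1 :=
    (ae_restrict_mem Metric.isClosed_sphere.measurableSet).mono fun ω hω => by simpa using hω
  have hF : Integrable F (((volume : Measure E3).prod volume).prod ν) :=
    integrable_mul_collisionIntegrand (EuclideanSpace.proj i) hG hc₀ hbd hν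
  have hF₁ : Integrable (fun x => ∫ ω, F (x, ω) ∂ν) ((volume : Measure E3).prod volume) :=
    hF.integral_prod_left
  have hQ : (fun v : E3 => v i * collQ G G v) = fun v => ∫ u, ∫ ω, F ((v, u), ω) ∂ν := by
    funext v
    simp only [collQ, ← integral_const_mul]
    rfl
  rw [hQ]
  refine ⟨hF₁.integral_prod_left, ?_⟩
  rw [← integral_prod _ hF₁, integral_integral_swap hF]
  refine integral_eq_zero_of_ae ?_
  filter_upwards [hν, hF.prod_left_ae] with ω hω hint
  refine integral_mul_collisionIntegrand_eq_zero volume G hω (ψ := fun v : E3 => v i)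
    (fun p => ?_) hint
  rw [← PiLp.add_apply, collisionMap_fst_add_snd, PiLp.add_apply]

/-- Collision invariance (momentum): for measurable `G` with Gaussian decay and each
coordinate `i`, `v ↦ vᵢ Q(G,G)(v)` is integrable and `∫ vᵢ Q(G,G)(v) dv = 0`. -/
theorem collision_invariant_momentum (G : E3 → ℝ) (hG : Measurable G)
    (C₀ c₀ : ℝ) (hC₀ : 0 ≤ C₀) (hc₀ : 0 < c₀)
    (hbd : ∀ v : E3, |G v| ≤ C₀ * Real.exp (-c₀ * ‖v‖ ^ 2)) :
    ∀ i : Fin 3,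
      Integrable (fun v : E3 => v i * collQ G G v) ∧
        (∫ v : E3, v i * collQ G G v) = 0 :=
  collision_invariant_momentum_general G hG C₀ c₀ hc₀ hbd
end
end

section
/- Let Ω ⊂ ℝ³ be a nonempty bounded open convex set and let 0 < γ < 1. Then ∫_Ω d(x, ∂Ω)^{−γ} dx < ∞, where d(x,∂Ω) denotes the Euclidean distance from x to the boundary ∂Ω. -/
open MeasureTheory Real Set
noncomputable section

/-!
If `B(x₀, r) ⊆ Ω`, convexity puts the ball of radius `t` around `x₀ + (1 - t/r) • (y - x₀)`
inside `Ω` for every `y ∈ Ω`, so the homothetic copy of `Ω` with centre `x₀` and ratio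
`1 - t/r` stays at distance `≥ t` from `∂Ω`. Hence the boundary layer `{x ∈ Ω | d(x, ∂Ω) < t}`
has measure at most `(1 - (1 - t/r)^n) |Ω| ≤ n (t/r) |Ω|`. By the layer-cake formula,
`∫_Ω d^{-γ} = ∫_0^∞ |{x ∈ Ω | d(x) < s^{-1/γ}}| ds`, and the integrand is `O(s^{-1/γ})` at
infinity, which is integrable because `γ < 1`.
-/

open Metric Filter Topology AffineMap Module
open scoped ENNReal Pointwise

theorem le_infDist_frontier_of_ball_subset {X : Type*} [PseudoMetricSpace X] {Ω : Set X}
    (hfr : (frontier Ω).Nonempty) {x : X} {s : ℝ} (h : ball x s ⊆ Ω) :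
    s ≤ infDist x (frontier Ω) :=
  (le_infDist hfr).2 fun _ hy => not_lt.1 fun hxy =>
    hy.2 (interior_maximal h isOpen_ball (mem_ball'.2 hxy))

section

variable {E : Type*} [NormedAddCommGroup E] [NormedSpace ℝ E]

theorem Convex.ball_homothety_subset {Ω : Set E} (hΩ : Convex ℝ Ω) {x₀ y : E} {r c : ℝ}
    (hball : ball x₀ r ⊆ Ω) (hy : y ∈ Ω) (hc0 : 0 ≤ c) (hc1 : c < 1) :
    ball (homothety x₀ c y) ((1 - c) * r) ⊆ Ω :=
  calc ball (homothety x₀ c y) ((1 - c) * r) = (1 - c) • ball x₀ r + c • {y} := by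
        rw [_root_.smul_ball (by linarith), smul_set_singleton, ball_add_singleton,
          Real.norm_of_nonneg (by linarith), homothety_apply]
        congr 1
        simp only [vsub_eq_sub, vadd_eq_add]
        module
    _ ⊆ (1 - c) • Ω + c • Ω := by gcongr; exact singleton_subset_iff.2 hy
    _ ⊆ Ω := hΩ.set_combo_subset (by linarith) hc0 (by ring)

theorem Convex.addHaar_inter_infDist_frontier_lt_le [FiniteDimensional ℝ E] [MeasurableSpace E]
    [BorelSpace E] (μ : Measure E) [μ.IsAddHaarMeasure] {Ω : Set E} (hΩ : Convex ℝ Ω)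
    (hfr : (frontier Ω).Nonempty) (hμΩ : μ Ω ≠ ∞) {x₀ : E} {r t : ℝ} (hball : ball x₀ r ⊆ Ω)
    (ht0 : 0 < t) (htr : t ≤ r) :
    μ (Ω ∩ {x | infDist x (frontier Ω) < t}) ≤ ENNReal.ofReal (finrank ℝ E * t / r) * μ Ω := by
  have hr : 0 < r := ht0.trans_le htr
  set c := 1 - t / r
  have hc0 : 0 ≤ c := sub_nonneg.2 ((div_le_one hr).2 htr)
  have hc1 : c < 1 := sub_lt_self 1 (div_pos ht0 hr)
  have hcr : (1 - c) * r = t := by rw [sub_sub_cancel, div_mul_cancel₀ t hr.ne']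
  set H := homothety x₀ c '' Ω
  have hH_ball : ∀ x ∈ H, ball x t ⊆ Ω := by
    rintro _ ⟨y, hy, rfl⟩
    exact hcr ▸ hΩ.ball_homothety_subset hball hy hc0 hc1
  have hHΩ : H ⊆ Ω := fun x hx => hH_ball x hx (mem_ball_self ht0)
  have hμH : μ H = ENNReal.ofReal (c ^ finrank ℝ E) * μ Ω := by
    rw [Measure.addHaar_image_homothety, abs_of_nonneg (pow_nonneg hc0 _)]
  have hbernoulli : 1 ≤ finrank ℝ E * t / r + c ^ finrank ℝ E := by
    have := one_add_mul_le_pow (a := -(t / r)) (by linarith [div_le_one hr |>.2 htr]) (finrank ℝ E)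
    rw [← sub_eq_add_neg] at this
    linarith [mul_div_assoc (finrank ℝ E : ℝ) t r]
  calc μ (Ω ∩ {x | infDist x (frontier Ω) < t})
      ≤ μ (Ω \ H) := measure_mono fun x ⟨hxΩ, hxt⟩ =>
        ⟨hxΩ, fun hxH => (le_infDist_frontier_of_ball_subset hfr (hH_ball x hxH)).not_gt hxt⟩
    _ = μ Ω - μ H := measure_sdiff hHΩ ((hΩ.affine_image _).nullMeasurableSet μ)
        (hμH ▸ ENNReal.mul_ne_top ENNReal.ofReal_ne_top hμΩ)
    _ ≤ ENNReal.ofReal (finrank ℝ E * t / r) * μ Ω := by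
        rw [hμH, tsub_le_iff_right, ← add_mul, ← ENNReal.ofReal_add (by positivity) (by positivity)]
        exact le_mul_of_one_le_left' (ENNReal.one_le_ofReal.2 hbernoulli)

end

theorem lt_rpow_neg_inv_of_lt_rpow_neg {x s γ : ℝ} (hx : 0 ≤ x) (hs : 0 < s) (hγ : 0 < γ)
    (h : s < x ^ (-γ)) : x < s ^ (-γ⁻¹) := by
  rcases hx.eq_or_lt with rfl | hx
  · simp [zero_rpow (neg_ne_zero.2 hγ.ne'), hs.not_gt] at h
  · have hinv : (x ^ (-γ)) ^ (-γ⁻¹) = x := by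
      rw [← inv_neg, rpow_rpow_inv hx.le (neg_ne_zero.2 hγ.ne')]
    simpa only [hinv] using rpow_lt_rpow_of_neg hs h (neg_neg_of_pos (inv_pos.2 hγ))

theorem integrable_rpow_neg_of_meas_lt_le {α : Type*} [MeasurableSpace α] {μ : Measure α}
    [IsFiniteMeasure μ] {f : α → ℝ} (hf : AEMeasurable f μ) (hf0 : 0 ≤ f) {C : ℝ≥0∞}
    (hC : C ≠ ∞) {a γ : ℝ} (hγ0 : 0 < γ) (hγa : γ < a)
    (h : ∀ᶠ t in 𝓝[>] 0, μ {x | f x < t} ≤ C * ENNReal.ofReal (t ^ a)) :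
    Integrable (fun x => f x ^ (-γ)) μ := by
  have hg0 : ∀ x, 0 ≤ f x ^ (-γ) := fun x => rpow_nonneg (hf0 x) _
  refine ⟨(hf.pow_const _).aestronglyMeasurable, ?_⟩
  rw [hasFiniteIntegral_iff_ofReal (ae_of_all _ hg0),
    lintegral_eq_lintegral_meas_lt μ (ae_of_all _ hg0) (hf.pow_const _)]
  have htend : Tendsto (fun s : ℝ => s ^ (-γ⁻¹)) atTop (𝓝[>] 0) :=
    tendsto_nhdsWithin_iff.2 ⟨tendsto_rpow_neg_atTop (inv_pos.2 hγ0),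
      (eventually_gt_atTop 0).mono fun s hs => rpow_pos_of_pos hs _⟩
  obtain ⟨S, hS⟩ := eventually_atTop.1 ((htend.eventually h).and (eventually_ge_atTop 1))
  have hS0 : 0 < S := zero_lt_one.trans_le (hS S le_rfl).2
  have hexp : -γ⁻¹ * a < -1 := by
    rw [neg_mul, neg_lt_neg_iff, inv_mul_eq_div, one_lt_div hγ0]; exact hγa
  have htail : ∀ s ∈ Ioi S, μ {x | s < f x ^ (-γ)} ≤ C * ENNReal.ofReal (s ^ (-γ⁻¹ * a)) := by
    intro s hs
    have hs0 : 0 < s := hS0.trans hs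
    calc μ {x | s < f x ^ (-γ)} ≤ μ {x | f x < s ^ (-γ⁻¹)} :=
          measure_mono fun x hx => lt_rpow_neg_inv_of_lt_rpow_neg (hf0 x) hs0 hγ0 hx
      _ ≤ C * ENNReal.ofReal ((s ^ (-γ⁻¹)) ^ a) := (hS s (le_of_lt hs)).1
      _ = C * ENNReal.ofReal (s ^ (-γ⁻¹ * a)) := by rw [rpow_mul hs0.le]
  calc ∫⁻ s in Ioi 0, μ {x | s < f x ^ (-γ)}
      ≤ (∫⁻ s in Ioc 0 S, μ {x | s < f x ^ (-γ)}) + ∫⁻ s in Ioi S, μ {x | s < f x ^ (-γ)} := by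
        rw [← Ioc_union_Ioi_eq_Ioi hS0.le]
        exact lintegral_union_le _ _ _
    _ ≤ (∫⁻ _ in Ioc 0 S, μ univ) + ∫⁻ s in Ioi S, C * ENNReal.ofReal (s ^ (-γ⁻¹ * a)) :=
        add_le_add (lintegral_mono fun _ => measure_mono (subset_univ _))
          (setLIntegral_mono' measurableSet_Ioi htail)
    _ < ∞ := by
        rw [setLIntegral_const, lintegral_const_mul' _ _ hC]
        exact ENNReal.add_lt_top.2
          ⟨ENNReal.mul_lt_top (measure_lt_top μ univ) measure_Ioc_lt_top,
            ENNReal.mul_lt_top hC.lt_top (integrableOn_Ioi_rpow_of_lt hexp hS0).lintegral_lt_top⟩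

/-- For a nonempty bounded open convex `Ω ⊂ ℝ³` and `0 < γ < 1`, the negative power
of the distance to the boundary, `x ↦ d(x,∂Ω)^{-γ}`, is integrable over `Ω`. -/
theorem integrable_neg_pow_dist_boundary (Ω : Set E3) (hne : Ω.Nonempty)
    (hopen : IsOpen Ω) (hconv : Convex ℝ Ω) (hbdd : Bornology.IsBounded Ω)
    (γ : ℝ) (hγ0 : 0 < γ) (hγ1 : γ < 1) :
    IntegrableOn (fun x : E3 => Metric.infDist x (frontier Ω) ^ (-γ)) Ω := by
  obtain ⟨x₀, hx₀⟩ := hne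
  obtain ⟨r, hr, hball⟩ := Metric.isOpen_iff.1 hopen x₀ hx₀
  have hfr : (frontier Ω).Nonempty :=
    nonempty_frontier_iff.2 ⟨⟨x₀, hx₀⟩, fun h => NormedSpace.unbounded_univ ℝ E3 (h ▸ hbdd)⟩
  have hμΩ : volume Ω ≠ ∞ := hbdd.measure_lt_top.ne
  have : IsFiniteMeasure (volume.restrict Ω) := isFiniteMeasure_restrict.2 hμΩ
  refine integrable_rpow_neg_of_meas_lt_le (Metric.continuous_infDist_pt _).aemeasurable
    (fun _ => Metric.infDist_nonneg) (C := ENNReal.ofReal (3 / r) * volume Ω) (by finiteness)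
    hγ0 (a := 1) hγ1 ?_
  filter_upwards [Ioc_mem_nhdsGT hr] with t ⟨ht0, htr⟩
  rw [Measure.restrict_apply' hopen.measurableSet, inter_comm]
  calc volume (Ω ∩ {x | Metric.infDist x (frontier Ω) < t})
      ≤ ENNReal.ofReal (finrank ℝ E3 * t / r) * volume Ω :=
        hconv.addHaar_inter_infDist_frontier_lt_le volume hfr hμΩ hball ht0 htr
    _ = ENNReal.ofReal (3 / r) * volume Ω * ENNReal.ofReal (t ^ (1 : ℝ)) := by
        rw [finrank_euclideanSpace_fin, Nat.cast_ofNat, rpow_one, mul_right_comm, mul_div_right_comm,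
          ENNReal.ofReal_mul (by positivity)]
end
end
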